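/- Let 𝔠 be the Cantor set, X = 𝔠^A, P ⊆ X closed, and f : P → P a homeomorphism with f(P^{(κ)}) = P^{(κ)} for every cardinal κ. Let Γ ⊆ Λ be f-admissible subsets of A with Λ ∖ Γ countable, and let f_Γ, f_Λ denote the homeomorphisms of P_Γ, P_Λ induced by f. Suppose there exists a closed set F ⊆ P_Γ such that F × X_{Λ∖Γ} ⊆ P_Λ (under the identification X_Λ = X_Γ × X_{Λ∖Γ}) and f_Λ(F × X_{Λ∖Γ}) = f_Γ(F) × X_{Λ∖Γ}. Then there exist a closed G_δ-set L in P_Γ containing F and a homeomorphism f'_Λ : L × X_{Λ∖Γ} → f_Γ(L) × X_{Λ∖Γ} which is fiberwise with respect to f_Γ (i.e., π^Λ_Γ ∘ f'_Λ = f_Γ ∘ π^Λ_Γ) and extends the restriction of f_Λ to (L × X_{Λ∖Γ}) ∩ P_Λ. -/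

import Mathlib

/-!
Extend `f_Γ`, `f_Γ⁻¹` to continuous self-maps `γ`, `γ'` of `𝔠^Γ`, and the `X_{Λ∖Γ}`-coordinates of
`f_Λ`, `f_Λ⁻¹` to continuous maps `ψ`, `ψ'` on `𝔠^Λ = 𝔠^Γ × X_{Λ∖Γ}`; this is possible because a
clopen subset of a closed subset of a Stone space is cut out by a clopen set of the whole space.
The maps `(x, z) ↦ (γ x, ψ (x, z))` and `(u, z) ↦ (γ' u, ψ' (u, z))` are mutually inverse over the
set `L` of those `x ∈ P_Γ` for which `ψ (x, ·)` and `ψ' (γ x, ·)` are mutually inverse. This set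
is closed, and it is a `G_δ` because the diagonal of the compact metrizable `X_{Λ∖Γ}` is a `G_δ`
and projecting along a compact factor is a closed map. It contains `F`, since over `F` the
extended maps agree with `f_Λ` and `f_Λ⁻¹`, which map `F × X_{Λ∖Γ}` onto `f_Γ(F) × X_{Λ∖Γ}`.
-/

universe u

open Set

/-- The projection of the Cantor cube `𝔠^A = A → (ℕ → Bool)` onto the subcube `𝔠^B`. -/
def proj {A : Type u} (B : Set A) (x : A → ℕ → Bool) : B → ℕ → Bool :=
  fun b => x b

/-- The projection of the subcube `𝔠^B` onto the subcube `𝔠^C` for `C ⊆ B`. -/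
def projRes {A : Type u} {B C : Set A} (h : C ⊆ B) (y : B → ℕ → Bool) : C → ℕ → Bool :=
  fun c => y ⟨c.1, h c.2⟩

/-- The `λ`-interior of a set `P` in a topological space `Z`: for infinite `λ`, the set of
points `x ∈ P` that are contained in a `G_λ`-subset (an intersection of at most `λ` open sets)
of `Z` lying inside `P`; for finite `λ`, the ordinary interior of `P`. -/
def lamInterior {Z : Type u} [TopologicalSpace Z] (lam : Cardinal.{u}) (P : Set Z) : Set Z :=
  if lam < Cardinal.aleph0 then interior P
  else {x | x ∈ P ∧ ∃ K : Set Z,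
    (∃ S : Set (Set Z), (∀ U ∈ S, IsOpen U) ∧ Cardinal.mk S ≤ lam ∧ K = ⋂₀ S) ∧ x ∈ K ∧ K ⊆ P}

/-- The image of a subset `S` of the ambient space under a homeomorphism `f : P ≃ₜ K`
between subspaces, i.e. `f(S ∩ P)` viewed in the ambient space of `K`. -/
def imageOn {Z W : Type u} [TopologicalSpace Z] [TopologicalSpace W] {P : Set Z} {K : Set W}
    (f : P ≃ₜ K) (S : Set Z) : Set W :=
  Subtype.val '' (⇑f '' (Subtype.val ⁻¹' S))

section Extension

variable {X : Type*} [TopologicalSpace X] [CompactSpace X] [T2Space X]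
  [TotallyDisconnectedSpace X] {Q : Set X}

theorem exists_continuous_bool_extension (hQ : IsClosed Q) {φ : Q → Bool} (hφ : Continuous φ) :
    ∃ ψ : X → Bool, Continuous ψ ∧ ∀ y : Q, ψ y = φ y := by
  have hcl : ∀ b, IsClosed (Subtype.val '' (φ ⁻¹' {b})) := fun b =>
    (hQ.isClosedEmbedding_subtypeVal).isClosedMap _ ((isClosed_discrete {b}).preimage hφ)
  obtain ⟨C, hC, hTC, hCF⟩ := exists_clopen_of_closed_subset_open (hcl true)
    (hcl false).isOpen_compl (by
      rintro _ ⟨y, hy, rfl⟩ ⟨y', hy', hyy'⟩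
      cases Subtype.val_injective hyy'
      simp_all)
  refine ⟨C.boolIndicator, (continuous_boolIndicator_iff_isClopen C).mpr hC, fun y => ?_⟩
  cases hy : φ y
  · exact (C.notMem_iff_boolIndicator _).mp fun h => hCF h ⟨y, hy, rfl⟩
  · exact (C.mem_iff_boolIndicator _).mp (hTC ⟨y, hy, rfl⟩)

theorem exists_continuous_cantorCube_extension {ι : Type*} (hQ : IsClosed Q)
    {φ : Q → ι → ℕ → Bool} (hφ : Continuous φ) :
    ∃ ψ : X → ι → ℕ → Bool, Continuous ψ ∧ ∀ y : Q, ψ y = φ y := by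
  choose ψ hψ hψQ using fun i n => exists_continuous_bool_extension hQ
    (φ := fun y => φ y i n) (by fun_prop)
  exact ⟨fun x i n => ψ i n x, by fun_prop, fun y => funext₂ fun i n => hψQ i n y⟩

end Extension

theorem exists_continuous_extension_homeomorph {ι : Type*} {Y : Set (ι → ℕ → Bool)}
    (hY : IsClosed Y) (g : Y ≃ₜ Y) :
    ∃ γ γ' : (ι → ℕ → Bool) → ι → ℕ → Bool, Continuous γ ∧ Continuous γ' ∧
      (∀ y : Y, γ y = g y) ∧ ∀ x ∈ Y, γ' (γ x) = x := by
  obtain ⟨γ, hγ, hγY⟩ := exists_continuous_cantorCube_extension hY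
    (φ := fun y => (g y).1) (by fun_prop)
  obtain ⟨γ', hγ', hγ'Y⟩ := exists_continuous_cantorCube_extension hY
    (φ := fun y => (g.symm y).1) (by fun_prop)
  refine ⟨γ, γ', hγ, hγ', hγY, fun x hx => ?_⟩
  rw [hγY ⟨x, hx⟩, hγ'Y, g.symm_apply_apply]

section ProjectionForall

variable {X Z : Type*} [TopologicalSpace X] [TopologicalSpace Z]

theorem IsClosed.setOf_forall_prodMk_mem {W : Set (X × Z)} (hW : IsClosed W) :
    IsClosed {x | ∀ z, (x, z) ∈ W} := by
  rw [show {x | ∀ z, (x, z) ∈ W} = ⋂ z, (·, z) ⁻¹' W by ext; simp]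
  exact isClosed_iInter fun z => hW.preimage (Continuous.prodMk_left z)

theorem IsOpen.setOf_forall_prodMk_mem [CompactSpace Z] {W : Set (X × Z)} (hW : IsOpen W) :
    IsOpen {x | ∀ z, (x, z) ∈ W} := by
  rw [show {x | ∀ z, (x, z) ∈ W} = (Prod.fst '' Wᶜ)ᶜ by ext; simp]
  exact (isClosedMap_fst_of_compactSpace _ hW.isClosed_compl).isOpen_compl

theorem IsGδ.setOf_forall_prodMk_mem [CompactSpace Z] {W : Set (X × Z)} (hW : IsGδ W) :
    IsGδ {x | ∀ z, (x, z) ∈ W} := by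
  obtain ⟨T, hTo, hTc, rfl⟩ := hW
  have : {x | ∀ z, (x, z) ∈ ⋂₀ T} = ⋂ t ∈ T, {x | ∀ z, (x, z) ∈ t} := by
    ext x
    simp only [mem_sInter, mem_ofPred_eq, mem_iInter]
    tauto
  rw [this]
  exact .biInter_of_isOpen hTc fun t ht => (hTo t ht).setOf_forall_prodMk_mem

end ProjectionForall

def fiberInvSet {X Z : Type*} (γ : X → X) (ψ ψ' : X × Z → Z) : Set X :=
  {x | ∀ z, ψ' (γ x, ψ (x, z)) = z ∧ ψ (x, ψ' (γ x, z)) = z}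

theorem fiberInvSet_eq_setOf_forall {X Z : Type*} (γ : X → X) (ψ ψ' : X × Z → Z) :
    fiberInvSet γ ψ ψ' = {x | ∀ z, (x, z) ∈
      {p : X × Z | (ψ' (γ p.1, ψ p), p.2) ∈ diagonal Z} ∩
        {p : X × Z | (ψ (p.1, ψ' (γ p.1, p.2)), p.2) ∈ diagonal Z}} :=
  rfl

section FiberwiseHomeomorph

variable {E X Z : Type*} [TopologicalSpace E] [TopologicalSpace X] [TopologicalSpace Z]
  {γ γ' : X → X} {ψ ψ' : X × Z → Z}

theorem isClosed_fiberInvSet [T2Space Z] (hγ : Continuous γ) (hψ : Continuous ψ)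
    (hψ' : Continuous ψ') : IsClosed (fiberInvSet γ ψ ψ') := by
  rw [fiberInvSet_eq_setOf_forall]
  exact IsClosed.setOf_forall_prodMk_mem <|
    (isClosed_diagonal.preimage (by fun_prop)).inter (isClosed_diagonal.preimage (by fun_prop))

theorem isGδ_fiberInvSet [CompactSpace Z] [TopologicalSpace.MetrizableSpace Z]
    (hγ : Continuous γ) (hψ : Continuous ψ) (hψ' : Continuous ψ') :
    IsGδ (fiberInvSet γ ψ ψ') := by
  rw [fiberInvSet_eq_setOf_forall]
  exact IsGδ.setOf_forall_prodMk_mem <|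
    (isClosed_diagonal.isGδ.preimage (by fun_prop)).inter
      (isClosed_diagonal.isGδ.preimage (by fun_prop))

def fiberwiseHomeomorph (e : E ≃ₜ X × Z) (hγ : Continuous γ) (hγ' : Continuous γ')
    (hψ : Continuous ψ) (hψ' : Continuous ψ') {S : Set X} (hγ'γ : ∀ x ∈ S, γ' (γ x) = x)
    (hS : S ⊆ fiberInvSet γ ψ ψ') :
    {y : E | (e y).1 ∈ S} ≃ₜ {y : E | (e y).1 ∈ γ '' S} where
  toFun y := ⟨e.symm (γ (e y).1, ψ (e y)), (e y).1, y.2, by simp⟩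
  invFun y := ⟨e.symm (γ' (e y).1, ψ' (e y)), by
    obtain ⟨x, hx, hxy⟩ := y.2
    simpa [← hxy, hγ'γ x hx] using hx⟩
  left_inv := by
    rintro ⟨y, hy⟩
    ext1
    simp only [Homeomorph.apply_symm_apply, hγ'γ _ hy, (hS hy (e y).2).1, Prod.mk.eta,
      Homeomorph.symm_apply_apply]
  right_inv := by
    rintro ⟨y, x, hx, hxy⟩
    have hy : e y = (γ x, (e y).2) := Prod.ext hxy.symm rfl
    ext1
    simp only [Homeomorph.apply_symm_apply, ← hxy, hγ'γ x hx]
    rw [hy, (hS hx _).2, ← hy, Homeomorph.symm_apply_apply]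
  continuous_toFun := by fun_prop
  continuous_invFun := by fun_prop

theorem apply_fiberwiseHomeomorph (e : E ≃ₜ X × Z) (hγ : Continuous γ) (hγ' : Continuous γ')
    (hψ : Continuous ψ) (hψ' : Continuous ψ') {S : Set X} (hγ'γ : ∀ x ∈ S, γ' (γ x) = x)
    (hS : S ⊆ fiberInvSet γ ψ ψ') (y : {y : E | (e y).1 ∈ S}) :
    e (fiberwiseHomeomorph e hγ hγ' hψ hψ' hγ'γ hS y) = (γ (e y).1, ψ (e y)) :=
  e.apply_symm_apply _

theorem mem_fiberInvSet_of_fiber_subset (e : E ≃ₜ X × Z) {Q : Set E} (h : Q ≃ Q)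
    (hfib : ∀ q : Q, (e (h q)).1 = γ (e q).1) (hψ : ∀ q : Q, ψ (e q) = (e (h q)).2)
    (hψ' : ∀ q : Q, ψ' (e q) = (e (h.symm q)).2) {x : X} (hxQ : ∀ z, e.symm (x, z) ∈ Q)
    (hsurj : ∀ z, ∃ q : Q, (e q).1 = x ∧ (h q : E) = e.symm (γ x, z)) :
    x ∈ fiberInvSet γ ψ ψ' := by
  intro z
  constructor
  · let q : Q := ⟨e.symm (x, z), hxQ z⟩
    have hq : e q = (x, z) := e.apply_symm_apply _
    have hhq : e (h q) = (γ x, ψ (x, z)) := Prod.ext (by rw [hfib, hq]) (by rw [← hq, hψ])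
    rw [← hhq, hψ', h.symm_apply_apply, hq]
  · obtain ⟨q, hqx, hqz⟩ := hsurj z
    have hhq : e (h q) = (γ x, z) := by rw [hqz, e.apply_symm_apply]
    rw [← hhq, hψ', h.symm_apply_apply, ← hqx, Prod.mk.eta, hψ, hhq]

theorem exists_isGδ_fiberwiseHomeomorph [CompactSpace Z] [TopologicalSpace.MetrizableSpace Z]
    (e : E ≃ₜ X × Z) (hγ : Continuous γ) (hγ' : Continuous γ') (hψ : Continuous ψ)
    (hψ' : Continuous ψ') {Y F : Set X} (hY : IsClosed Y) (hγ'γ : ∀ x ∈ Y, γ' (γ x) = x)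
    (hFY : F ⊆ Y) (hF : F ⊆ fiberInvSet γ ψ ψ') :
    ∃ L ⊆ Y, F ⊆ L ∧ IsClosed L ∧
      (∃ U : ℕ → Set X, (∀ n, IsOpen (U n)) ∧ L = Y ∩ ⋂ n, U n) ∧
      ∃ g : {y : E | (e y).1 ∈ L} ≃ₜ {y : E | (e y).1 ∈ γ '' L},
        ∀ y, e (g y) = (γ (e y).1, ψ (e y)) := by
  obtain ⟨U, hU, hUeq⟩ := isGδ_iff_eq_iInter_nat.mp (isGδ_fiberInvSet hγ hψ hψ')
  refine ⟨Y ∩ fiberInvSet γ ψ ψ', inter_subset_left, subset_inter hFY hF,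
    hY.inter (isClosed_fiberInvSet hγ hψ hψ'), ⟨U, hU, by rw [hUeq]⟩,
    fiberwiseHomeomorph e hγ hγ' hψ hψ' (fun x hx => hγ'γ x hx.1) inter_subset_right,
    apply_fiberwiseHomeomorph e hγ hγ' hψ hψ' _ _⟩

end FiberwiseHomeomorph

theorem imageOn_eq_image {Z W : Type u} [TopologicalSpace Z] [TopologicalSpace W] {P : Set Z}
    {K : Set W} (f : P ≃ₜ K) {g : Z → W} (hg : ∀ x : P, g x = f x) {S : Set Z} (hS : S ⊆ P) :
    imageOn f S = g '' S := by
  ext w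
  constructor
  · rintro ⟨_, ⟨x, hx, rfl⟩, rfl⟩
    exact ⟨x, hx, hg x⟩
  · rintro ⟨x, hx, rfl⟩
    exact ⟨_, ⟨⟨x, hS hx⟩, hx, rfl⟩, (hg _).symm⟩

section CantorCube

variable {A : Type u} {Γ Λ : Set A}

theorem continuous_proj (B : Set A) : Continuous (proj (A := A) B) :=
  continuous_pi fun _ => continuous_apply _

theorem mapsTo_projRes (hΓΛ : Γ ⊆ Λ) (P : Set (A → ℕ → Bool)) :
    MapsTo (projRes hΓΛ) (proj Λ '' P) (proj Γ '' P) := by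
  rintro _ ⟨p, hp, rfl⟩
  exact ⟨p, hp, rfl⟩

open scoped Classical in
/-- The identification `𝔠^Λ = 𝔠^Γ × 𝔠^(Λ \ Γ)`. -/
noncomputable def cubeSplit (hΓΛ : Γ ⊆ Λ) :
    (Λ → ℕ → Bool) ≃ₜ (Γ → ℕ → Bool) × (↥(Λ \ Γ) → ℕ → Bool) where
  toFun y := (projRes hΓΛ y, fun c => y ⟨c.1, c.2.1⟩)
  invFun p a := if h : a.1 ∈ Γ then p.1 ⟨a.1, h⟩ else p.2 ⟨a.1, a.2, h⟩
  left_inv y := by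
    funext a
    by_cases h : a.1 ∈ Γ <;> simp [h, projRes]
  right_inv p := by
    ext c
    · simp [projRes]
    · simp [c.2.2]
  continuous_toFun := by
    refine .prodMk (continuous_pi fun _ => continuous_apply _) (continuous_pi fun _ => ?_)
    exact continuous_apply _
  continuous_invFun := continuous_pi fun a => by split_ifs <;> fun_prop

theorem projRes_cubeSplit_symm (hΓΛ : Γ ⊆ Λ) (p : (Γ → ℕ → Bool) × (↥(Λ \ Γ) → ℕ → Bool)) :
    projRes hΓΛ ((cubeSplit hΓΛ).symm p) = p.1 :=
  congrArg Prod.fst ((cubeSplit hΓΛ).apply_symm_apply p)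

variable (hΓΛ : Γ ⊆ Λ) {P : Set (A → ℕ → Bool)} {f : P ≃ₜ P}
  {fΓ : (proj Γ '' P : Set (Γ → ℕ → Bool)) ≃ₜ (proj Γ '' P : Set (Γ → ℕ → Bool))}
  {fΛ : (proj Λ '' P : Set (Λ → ℕ → Bool)) ≃ₜ (proj Λ '' P : Set (Λ → ℕ → Bool))}

theorem projRes_apply_of_induced
    (hfΓ : ∀ p : P, (fΓ ⟨proj Γ p.1, ⟨p.1, p.2, rfl⟩⟩).1 = proj Γ (f p).1)
    (hfΛ : ∀ p : P, (fΛ ⟨proj Λ p.1, ⟨p.1, p.2, rfl⟩⟩).1 = proj Λ (f p).1)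
    (q : proj Λ '' P) :
    projRes hΓΛ (fΛ q).1 = (fΓ ⟨projRes hΓΛ q, mapsTo_projRes hΓΛ P q.2⟩).1 := by
  obtain ⟨_, p, hp, rfl⟩ := q
  exact (congrArg (projRes hΓΛ) (hfΛ ⟨p, hp⟩)).trans (hfΓ ⟨p, hp⟩).symm

theorem exists_induced_apply_eq_cubeSplit_symm
    (hfΓ : ∀ p : P, (fΓ ⟨proj Γ p.1, ⟨p.1, p.2, rfl⟩⟩).1 = proj Γ (f p).1)
    (hfΛ : ∀ p : P, (fΛ ⟨proj Λ p.1, ⟨p.1, p.2, rfl⟩⟩).1 = proj Λ (f p).1)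
    {F : Set (Γ → ℕ → Bool)} (hFP : F ⊆ proj Γ '' P)
    (hFeq : imageOn fΛ {y : Λ → ℕ → Bool | projRes hΓΛ y ∈ F} =
      {y : Λ → ℕ → Bool | projRes hΓΛ y ∈ imageOn fΓ F})
    {x : Γ → ℕ → Bool} (hx : x ∈ F) (z : ↥(Λ \ Γ) → ℕ → Bool) :
    ∃ q : proj Λ '' P, projRes hΓΛ q = x ∧
      (fΛ q : Λ → ℕ → Bool) = (cubeSplit hΓΛ).symm ((fΓ ⟨x, hFP hx⟩).1, z) := by
  have hw : (cubeSplit hΓΛ).symm ((fΓ ⟨x, hFP hx⟩).1, z) ∈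
      imageOn fΛ {y | projRes hΓΛ y ∈ F} := by
    rw [hFeq, mem_ofPred_eq, projRes_cubeSplit_symm]
    exact ⟨_, ⟨⟨x, hFP hx⟩, hx, rfl⟩, rfl⟩
  obtain ⟨_, ⟨q, -, rfl⟩, hqw⟩ := hw
  refine ⟨q, congrArg Subtype.val (fΓ.injective (Subtype.ext ?_) :
    (⟨projRes hΓΛ q, mapsTo_projRes hΓΛ P q.2⟩ : proj Γ '' P) = ⟨x, hFP hx⟩), hqw⟩
  rw [← projRes_apply_of_induced hΓΛ hfΓ hfΛ, hqw, projRes_cubeSplit_symm]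

end CantorCube

theorem stmt14_general {A : Type u} (P : Set (A → ℕ → Bool)) (hP : IsClosed P) (f : P ≃ₜ P)
    (Γ Λ : Set A) (hΓΛ : Γ ⊆ Λ) (hdiff : (Λ \ Γ).Countable)
    (fΓ : (proj Γ '' P : Set (Γ → ℕ → Bool)) ≃ₜ (proj Γ '' P : Set (Γ → ℕ → Bool)))
    (hfΓ : ∀ p : P, (fΓ ⟨proj Γ p.1, ⟨p.1, p.2, rfl⟩⟩).1 = proj Γ (f p).1)
    (fΛ : (proj Λ '' P : Set (Λ → ℕ → Bool)) ≃ₜ (proj Λ '' P : Set (Λ → ℕ → Bool)))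
    (hfΛ : ∀ p : P, (fΛ ⟨proj Λ p.1, ⟨p.1, p.2, rfl⟩⟩).1 = proj Λ (f p).1)
    (F : Set (Γ → ℕ → Bool)) (hFP : F ⊆ proj Γ '' P)
    (hFcyl : {y : Λ → ℕ → Bool | projRes hΓΛ y ∈ F} ⊆ proj Λ '' P)
    (hFeq : imageOn fΛ {y : Λ → ℕ → Bool | projRes hΓΛ y ∈ F} =
      {y : Λ → ℕ → Bool | projRes hΓΛ y ∈ imageOn fΓ F}) :
    ∃ L : Set (Γ → ℕ → Bool), ∃ hLP : L ⊆ proj Γ '' P, F ⊆ L ∧ IsClosed L ∧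
      (∃ U : ℕ → Set (Γ → ℕ → Bool), (∀ n, IsOpen (U n)) ∧
        L = (proj Γ '' P) ∩ ⋂ n, U n) ∧
      ∃ f' : ({y : Λ → ℕ → Bool | projRes hΓΛ y ∈ L} : Set (Λ → ℕ → Bool)) ≃ₜ
          ({y : Λ → ℕ → Bool | projRes hΓΛ y ∈ imageOn fΓ L} : Set (Λ → ℕ → Bool)),
        (∀ y : ({y : Λ → ℕ → Bool | projRes hΓΛ y ∈ L} : Set (Λ → ℕ → Bool)),
          projRes hΓΛ (f' y).1 = (fΓ ⟨projRes hΓΛ y.1, hLP y.2⟩).1) ∧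
        (∀ (y : Λ → ℕ → Bool) (hy1 : projRes hΓΛ y ∈ L) (hy2 : y ∈ proj Λ '' P),
          (f' ⟨y, hy1⟩).1 = (fΛ ⟨y, hy2⟩).1) := by
  have : Countable ↥(Λ \ Γ) := hdiff.to_subtype
  let e := cubeSplit hΓΛ
  have hPΓ : IsClosed (proj Γ '' P) := (hP.isCompact.image (continuous_proj Γ)).isClosed
  have hPΛ : IsClosed (proj Λ '' P) := (hP.isCompact.image (continuous_proj Λ)).isClosed
  obtain ⟨γ, γ', hγ, hγ', hγP, hγ'γ⟩ := exists_continuous_extension_homeomorph hPΓ fΓ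
  obtain ⟨φ, hφ, hφP⟩ := exists_continuous_cantorCube_extension hPΛ
    (φ := fun q => (e (fΛ q)).2) (by fun_prop)
  obtain ⟨φ', hφ', hφ'P⟩ := exists_continuous_cantorCube_extension hPΛ
    (φ := fun q => (e (fΛ.symm q)).2) (by fun_prop)
  have hfib : ∀ q, (e (fΛ q)).1 = γ (e q).1 := fun q =>
    (projRes_apply_of_induced hΓΛ hfΓ hfΛ q).trans (hγP _).symm
  have hF : F ⊆ fiberInvSet γ (φ ∘ e.symm) (φ' ∘ e.symm) := fun x hx =>
    mem_fiberInvSet_of_fiber_subset e fΛ.toEquiv hfib (by simpa using hφP) (by simpa using hφ'P)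
      (fun z => hFcyl (by simpa [e, projRes_cubeSplit_symm] using hx)) fun z => by
        obtain ⟨q, hqx, hqz⟩ := exists_induced_apply_eq_cubeSplit_symm hΓΛ hfΓ hfΛ hFP hFeq hx z
        exact ⟨q, hqx, by rw [hγP ⟨x, hFP hx⟩]; exact hqz⟩
  obtain ⟨L, hLP, hFL, hLc, hLδ, g, hg⟩ := exists_isGδ_fiberwiseHomeomorph e hγ hγ'
    (hφ.comp e.symm.continuous) (hφ'.comp e.symm.continuous) hPΓ hγ'γ hFP hF
  refine ⟨L, hLP, hFL, hLc, hLδ, g.trans (Homeomorph.setCongr ?_), fun y => ?_,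
    fun y hy1 hy2 => ?_⟩
  · rw [← imageOn_eq_image fΓ hγP hLP]
    rfl
  · exact (congrArg Prod.fst (hg y)).trans (hγP ⟨projRes hΓΛ y.1, hLP y.2⟩)
  · apply e.injective
    rw [← Prod.mk.eta (p := e (fΛ _)), hfib, ← hφP]
    exact (hg ⟨y, hy1⟩).trans (by simp)

/-- Lemma 4.2 of the paper. Here the Cantor cube `𝔠^A` is `A → (ℕ → Bool)`, `Γ ⊆ Λ ⊆ A`
are `f`-admissible (with explicit induced homeomorphisms `f_Γ`, `f_Λ`), `Λ ∖ Γ` is countable,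
and `F ⊆ P_Γ` is closed with `F × X_{Λ∖Γ} ⊆ P_Λ` and
`f_Λ(F × X_{Λ∖Γ}) = f_Γ(F) × X_{Λ∖Γ}`. The conclusion produces a closed `G_δ`-set `L` in
`P_Γ` containing `F` and a fiberwise (w.r.t. `f_Γ`) homeomorphism
`L × X_{Λ∖Γ} → f_Γ(L) × X_{Λ∖Γ}` extending `f_Λ` on `(L × X_{Λ∖Γ}) ∩ P_Λ`. -/
theorem stmt14 {A : Type u} (P : Set (A → ℕ → Bool)) (hP : IsClosed P) (f : P ≃ₜ P)
    (hf : ∀ κ : Cardinal.{u}, imageOn f (lamInterior κ P) = lamInterior κ P)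
    (Γ Λ : Set A) (hΓΛ : Γ ⊆ Λ) (hdiff : (Λ \ Γ).Countable)
    (fΓ : (proj Γ '' P : Set (Γ → ℕ → Bool)) ≃ₜ (proj Γ '' P : Set (Γ → ℕ → Bool)))
    (hfΓ : ∀ p : P, (fΓ ⟨proj Γ p.1, ⟨p.1, p.2, rfl⟩⟩).1 = proj Γ (f p).1)
    (fΛ : (proj Λ '' P : Set (Λ → ℕ → Bool)) ≃ₜ (proj Λ '' P : Set (Λ → ℕ → Bool)))
    (hfΛ : ∀ p : P, (fΛ ⟨proj Λ p.1, ⟨p.1, p.2, rfl⟩⟩).1 = proj Λ (f p).1)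
    (F : Set (Γ → ℕ → Bool)) (hFc : IsClosed F) (hFP : F ⊆ proj Γ '' P)
    (hFcyl : {y : Λ → ℕ → Bool | projRes hΓΛ y ∈ F} ⊆ proj Λ '' P)
    (hFeq : imageOn fΛ {y : Λ → ℕ → Bool | projRes hΓΛ y ∈ F} =
      {y : Λ → ℕ → Bool | projRes hΓΛ y ∈ imageOn fΓ F}) :
    ∃ L : Set (Γ → ℕ → Bool), ∃ hLP : L ⊆ proj Γ '' P, F ⊆ L ∧ IsClosed L ∧
      (∃ U : ℕ → Set (Γ → ℕ → Bool), (∀ n, IsOpen (U n)) ∧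
        L = (proj Γ '' P) ∩ ⋂ n, U n) ∧
      ∃ f' : ({y : Λ → ℕ → Bool | projRes hΓΛ y ∈ L} : Set (Λ → ℕ → Bool)) ≃ₜ
          ({y : Λ → ℕ → Bool | projRes hΓΛ y ∈ imageOn fΓ L} : Set (Λ → ℕ → Bool)),
        (∀ y : ({y : Λ → ℕ → Bool | projRes hΓΛ y ∈ L} : Set (Λ → ℕ → Bool)),
          projRes hΓΛ (f' y).1 = (fΓ ⟨projRes hΓΛ y.1, hLP y.2⟩).1) ∧
        (∀ (y : Λ → ℕ → Bool) (hy1 : projRes hΓΛ y ∈ L) (hy2 : y ∈ proj Λ '' P),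
          (f' ⟨y, hy1⟩).1 = (fΛ ⟨y, hy2⟩).1) :=
  stmt14_general P hP f Γ Λ hΓΛ hdiff fΓ hfΓ fΛ hfΛ F hFP hFcyl hFeq
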